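/- arXiv:1205.6116 — 2 statements merged into one kernel-verified Lean document; each statement's English description precedes it below -/
import Mathlib

section
/- Let f : [0,∞) → ℝ be continuous (with arbitrary value at 0). Then for every 0 < δ ≤ T, sup_{t ∈ [δ,T]} |γ ∫_0^t e^{−γ(t−s)} f(s) ds − f(t)| → 0 as γ → ∞. -/
open Real MeasureTheory Filter Set Topology

/-!
The kernel `s ↦ γ e^{-γ(t-s)}` on `[0, t]` has mass `1 - e^{-γt}`, so
`K_γ f(t) - f(t) = γ ∫₀ᵗ e^{-γ(t-s)} (f s - f t) ds - e^{-γt} f(t)`.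
Split the integral at `t - η`: on `[t - η, t]` uniform continuity makes `|f s - f t|` small
while the kernel has mass at most `1`; on `[0, t - η]` the integrand is bounded and the kernel
has mass at most `e^{-γη}`. For `t ≥ δ ≥ η` the boundary term is also `O(e^{-γη})`, and all
bounds are uniform in `t ∈ [δ, T]`.
-/

theorem mul_integral_exp_neg_mul_sub (γ t a b : ℝ) :
    γ * ∫ s in a..b, exp (-(γ * (t - s))) = exp (-(γ * (t - b))) - exp (-(γ * (t - a))) := by
  have h := intervalIntegral.smul_integral_comp_mul_add (a := a) (b := b) exp γ (-(γ * t))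
  simp only [smul_eq_mul, integral_exp] at h
  convert h using 3 <;> ring_nf

theorem abs_mul_integral_exp_neg_mul_sub_mul_le {g : ℝ → ℝ} {γ t a b C : ℝ} (hγ : 0 ≤ γ)
    (hab : a ≤ b) (hg : ∀ s ∈ Ioc a b, |g s| ≤ C) :
    |γ * ∫ s in a..b, exp (-(γ * (t - s))) * g s|
      ≤ C * (exp (-(γ * (t - b))) - exp (-(γ * (t - a)))) := by
  have hdom : Continuous fun s => exp (-(γ * (t - s))) * C := by fun_prop
  have hpointwise : ∀ s ∈ Ioc a b, ‖exp (-(γ * (t - s))) * g s‖ ≤ exp (-(γ * (t - s))) * C :=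
    fun s hs => by
      rw [Real.norm_eq_abs, abs_mul, abs_of_pos (exp_pos _)]
      exact mul_le_mul_of_nonneg_left (hg s hs) (exp_pos _).le
  have hint : |∫ s in a..b, exp (-(γ * (t - s))) * g s| ≤ ∫ s in a..b, exp (-(γ * (t - s))) * C :=
    intervalIntegral.norm_integral_le_of_norm_le hab (ae_of_all _ hpointwise)
      (hdom.intervalIntegrable a b)
  calc |γ * ∫ s in a..b, exp (-(γ * (t - s))) * g s|
      = γ * |∫ s in a..b, exp (-(γ * (t - s))) * g s| := by rw [abs_mul, abs_of_nonneg hγ]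
    _ ≤ γ * ∫ s in a..b, exp (-(γ * (t - s))) * C := mul_le_mul_of_nonneg_left hint hγ
    _ = C * (exp (-(γ * (t - b))) - exp (-(γ * (t - a)))) := by
      rw [intervalIntegral.integral_mul_const, ← mul_integral_exp_neg_mul_sub]; ring

noncomputable def expSmoothing (γ : ℝ) (f : ℝ → ℝ) (t : ℝ) : ℝ :=
  γ * ∫ s in (0 : ℝ)..t, exp (-(γ * (t - s))) * f s

theorem expSmoothing_sub_eq {f : ℝ → ℝ} {t : ℝ} (γ : ℝ) (hf : IntervalIntegrable f volume 0 t) :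
    expSmoothing γ f t - f t
      = γ * (∫ s in (0 : ℝ)..t, exp (-(γ * (t - s))) * (f s - f t)) - exp (-(γ * t)) * f t := by
  have hkernel : Continuous fun s => exp (-(γ * (t - s))) := by fun_prop
  have hsplit : ∫ s in (0 : ℝ)..t, exp (-(γ * (t - s))) * (f s - f t)
      = (∫ s in (0 : ℝ)..t, exp (-(γ * (t - s))) * f s)
        - (∫ s in (0 : ℝ)..t, exp (-(γ * (t - s)))) * f t := by
    have hconst : Continuous fun s => exp (-(γ * (t - s))) * f t := by fun_prop
    rw [← intervalIntegral.integral_mul_const, ← intervalIntegral.integral_sub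
      (hf.continuousOn_mul hkernel.continuousOn) (hconst.intervalIntegrable 0 t)]
    simp only [mul_sub]
  rw [expSmoothing, hsplit, mul_sub, ← mul_assoc, mul_integral_exp_neg_mul_sub]
  simp only [sub_self, sub_zero, mul_zero, neg_zero, exp_zero]
  ring

theorem abs_expSmoothing_sub_le {f : ℝ → ℝ} {γ t η M ε : ℝ} (hγ : 0 ≤ γ) (hη : 0 ≤ η)
    (hηt : η ≤ t) (hf : IntervalIntegrable f volume 0 t) (hM : ∀ s ∈ Icc 0 t, |f s| ≤ M)
    (hε : ∀ s ∈ Icc (t - η) t, |f s - f t| ≤ ε) :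
    |expSmoothing γ f t - f t| ≤ 3 * M * exp (-(γ * η)) + ε := by
  have ht : 0 ≤ t := hη.trans hηt
  have hM0 : 0 ≤ M := (abs_nonneg _).trans (hM t ⟨ht, le_rfl⟩)
  have hε0 : 0 ≤ ε := (abs_nonneg _).trans (hε t ⟨by linarith, le_rfl⟩)
  have hint : IntervalIntegrable (fun s => exp (-(γ * (t - s))) * (f s - f t)) volume 0 t :=
    (hf.sub intervalIntegrable_const).continuousOn_mul (by fun_prop)
  have hsub : uIcc 0 (t - η) ⊆ uIcc 0 t ∧ uIcc (t - η) t ⊆ uIcc 0 t := by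
    constructor <;> apply uIcc_subset_uIcc <;> simp [ht, hη, hηt]
  have far := abs_mul_integral_exp_neg_mul_sub_mul_le (g := fun s => f s - f t) (t := t)
    (C := 2 * M) hγ (sub_nonneg.2 hηt) fun s hs => (abs_sub _ _).trans <| by
      linarith [hM s ⟨hs.1.le, hs.2.trans (by linarith)⟩, hM t ⟨ht, le_rfl⟩]
  have near := abs_mul_integral_exp_neg_mul_sub_mul_le (g := fun s => f s - f t) (t := t) hγ
    (sub_le_self t hη) fun s hs => hε s (Ioc_subset_Icc_self hs)
  have boundary : |exp (-(γ * t)) * f t| ≤ exp (-(γ * η)) * M := by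
    rw [abs_mul, abs_of_pos (exp_pos _)]
    exact mul_le_mul (exp_le_exp.2 (by nlinarith)) (hM t ⟨ht, le_rfl⟩) (abs_nonneg _)
      (exp_pos _).le
  rw [expSmoothing_sub_eq γ hf, ← intervalIntegral.integral_add_adjacent_intervals
    (hint.mono_set hsub.1) (hint.mono_set hsub.2), mul_add]
  simp only [sub_sub_cancel, sub_self, sub_zero, mul_zero, neg_zero, exp_zero] at far near
  refine (abs_sub _ _).trans <| (add_le_add_left (abs_add_le _ _) _).trans ?_
  linarith [mul_nonneg hε0 (exp_pos (-(γ * η))).le, mul_nonneg hM0 (exp_pos (-(γ * t))).le]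

/-- Let `f : [0,∞) → ℝ` be continuous (with arbitrary value at `0`). Then for
every `0 < δ ≤ T`, `sup_{t ∈ [δ,T]} |γ ∫_0^t e^{−γ(t−s)} f(s) ds − f(t)| → 0` as `γ → ∞`,
i.e. the smoothed processes converge to `f` uniformly on `[δ,T]`. -/
theorem integratedOU_tendstoUniformlyOn_away_from_zero
    (f : ℝ → ℝ) (hf : ContinuousOn f (Set.Ici 0)) :
    ∀ δ T : ℝ, 0 < δ → δ ≤ T →
      TendstoUniformlyOn
        (fun (γ : ℝ) (t : ℝ) => γ * ∫ s in (0 : ℝ)..t, Real.exp (-(γ * (t - s))) * f s)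
        f Filter.atTop (Set.Icc δ T) := by
  intro δ T hδ hδT
  have hfT : ContinuousOn f (Icc 0 T) := hf.mono Icc_subset_Ici_self
  obtain ⟨M, hM⟩ := isCompact_Icc.exists_bound_of_continuousOn hfT
  rw [Metric.tendstoUniformlyOn_iff]
  intro ε hε
  obtain ⟨η, hη, hfη⟩ := Metric.uniformContinuousOn_iff_le.1
    (isCompact_Icc.uniformContinuousOn_of_continuous hfT) (ε / 2) (half_pos hε)
  have hη' : 0 < min η δ := lt_min hη hδ
  have hdecay : Tendsto (fun γ => 3 * M * exp (-(γ * min η δ))) atTop (𝓝 0) := by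
    simpa using (tendsto_exp_neg_atTop_nhds_zero.comp
      (tendsto_id.atTop_mul_const hη')).const_mul (3 * M)
  filter_upwards [hdecay.eventually (gt_mem_nhds (half_pos hε)), eventually_ge_atTop 0]
    with γ hsmall hγ t ht
  have hIcc : Icc 0 t ⊆ Icc 0 T := Icc_subset_Icc_right ht.2
  have hnear : ∀ s ∈ Icc (t - min η δ) t, |f s - f t| ≤ ε / 2 := fun s hs => by
    refine hfη s (hIcc ⟨?_, hs.2⟩) t (hIcc ⟨?_, le_rfl⟩) ?_
    · linarith [min_le_right η δ, hs.1, ht.1]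
    · linarith [ht.1]
    · rw [Real.dist_eq, abs_sub_comm, abs_of_nonneg (by linarith [hs.2])]
      linarith [min_le_left η δ, hs.1]
  have hbound := abs_expSmoothing_sub_le hγ hη'.le ((min_le_right η δ).trans ht.1)
    ((hfT.mono hIcc).intervalIntegrable_of_Icc (hδ.le.trans ht.1))
    (fun s hs => by simpa only [Real.norm_eq_abs] using hM s (hIcc hs)) hnear
  rw [dist_comm, Real.dist_eq]
  exact hbound.trans_lt (by linarith)
end

section
/- Let B = (B_t)_{t≥0} be a standard one-dimensional Brownian motion with B_0 = 0 and almost surely continuous paths. Then almost surely, for every T > 0, sup_{t ∈ [0,T]} |γ ∫_0^t e^{−γ(t−s)} B_s ds − B_t| → 0 as γ → ∞. In particular, the normalized integrated Ornstein–Uhlenbeck process A X^γ_t = γ ∫_0^t e^{−γ(t−s)} B_s ds driven by B with zero initial conditions converges to B uniformly on compact time intervals, in probability. -/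
/-!
Write `A_γ f t = γ ∫₀ᵗ e^{-γ(t-s)} f s ds`. The weights `γ e^{-γ(t-s)} ds` on `[0, t]` together
with an atom `e^{-γt}` at `s = 0` form a probability measure under which `t - s` has mean
`(1 - e^{-γt})/γ ≤ 1/γ`. A path `f` with `f 0 = 0` that is continuous on `[0, T]` satisfies
`|f s - f t| ≤ ε + C (t - s)` there, so `|A_γ f t - f t| ≤ ε + C/γ` uniformly in `t ∈ [0, T]`:
this gives the almost sure statement. Convergence in probability follows by dominated
convergence, once continuity of the paths lets the event `∃ t, ε ≤ |A_γ B t - B t|` be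
dominated by a measurable countable union over rational times.
-/

open MeasureTheory ProbabilityTheory Filter

/-- A standard one-dimensional Brownian motion `B` on a probability space `(Ω, P)`:
`B 0 = 0`, almost surely continuous paths, independent increments, and Gaussian
increments `B t − B s ∼ N(0, t − s)` for `0 ≤ s ≤ t`. -/
structure IsStandardBrownianMotion {Ω : Type*} [MeasurableSpace Ω] (P : Measure Ω)
    (B : ℝ → Ω → ℝ) : Prop where
  isProbability : IsProbabilityMeasure P
  measurable : ∀ t : ℝ, Measurable (B t)
  init : ∀ ω, B 0 ω = 0
  cont : ∀ᵐ ω ∂P, Continuous fun t : ℝ => B t ω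
  indep_incr : ∀ (n : ℕ) (t : Fin (n + 1) → ℝ), (∀ i, 0 ≤ t i) → StrictMono t →
    iIndepFun
      (fun i : Fin n => fun ω => B (t i.succ) ω - B (t i.castSucc) ω) P
  gauss_incr : ∀ s t : ℝ, 0 ≤ s → s ≤ t →
    P.map (fun ω => B t ω - B s ω) = gaussianReal 0 (Real.toNNReal (t - s))

open Topology Set intervalIntegral

lemma IsCompact.exists_abs_sub_le_add_mul_dist {α : Type*} [PseudoMetricSpace α] {K : Set α}
    (hK : IsCompact K) {f : α → ℝ} (hf : ContinuousOn f K) {ε : ℝ} (hε : 0 < ε) :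
    ∃ C, 0 ≤ C ∧ ∀ x ∈ K, ∀ y ∈ K, |f x - f y| ≤ ε + C * dist x y := by
  obtain ⟨δ, hδ, hclose⟩ :=
    Metric.uniformContinuousOn_iff.1 (hK.uniformContinuousOn_of_continuous hf) ε hε
  obtain ⟨M, hM⟩ := hK.exists_bound_of_continuousOn hf
  have hM' : ∀ x ∈ K, |f x| ≤ max M 0 := fun x hx => (hM x hx).trans (le_max_left _ _)
  have hC : 0 ≤ 2 * max M 0 / δ := by positivity
  refine ⟨_, hC, fun x hx y hy => ?_⟩
  rcases lt_or_ge (dist x y) δ with hnear | hfar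
  · have := hclose x hx y hy hnear
    rw [Real.dist_eq] at this
    nlinarith [dist_nonneg (x := x) (y := y)]
  · have hfar' : 2 * max M 0 ≤ 2 * max M 0 / δ * dist x y := by
      rw [div_mul_eq_mul_div, le_div_iff₀ hδ]
      nlinarith [le_max_right M 0]
    linarith [abs_sub (f x) (f y), hM' x hx, hM' y hy]

lemma exists_rat_mem_Ioo_lt_of_continuous {φ : ℝ → ℝ} (hφ : Continuous φ) {a b c t : ℝ}
    (hab : a < b) (ht : t ∈ Icc a b) (hc : c < φ t) :
    ∃ q : ℚ, (q : ℝ) ∈ Ioo a b ∧ c < φ q := by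
  have hopen : IsOpen (Ioo a b ∩ φ ⁻¹' Ioi c) := isOpen_Ioo.inter (isOpen_Ioi.preimage hφ)
  have hne : (Ioo a b ∩ φ ⁻¹' Ioi c).Nonempty := by
    rw [← closure_Ioo hab.ne] at ht
    obtain ⟨x, hx, hx'⟩ := mem_closure_iff.1 ht _ (isOpen_Ioi.preimage hφ) hc
    exact ⟨x, hx', hx⟩
  exact Rat.denseRange_cast.exists_mem_open hopen hne

lemma hasDerivAt_exp_kernel (γ t s : ℝ) :
    HasDerivAt (fun s => Real.exp (-(γ * (t - s)))) (γ * Real.exp (-(γ * (t - s)))) s := by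
  have := ((((hasDerivAt_id s).const_sub t).const_mul γ).neg).exp
  simpa [mul_comm] using this

lemma mul_integral_exp_kernel (γ t : ℝ) :
    γ * ∫ s in (0 : ℝ)..t, Real.exp (-(γ * (t - s))) = 1 - Real.exp (-(γ * t)) := by
  rw [← intervalIntegral.integral_const_mul,
    integral_eq_sub_of_hasDerivAt (fun s _ => hasDerivAt_exp_kernel γ t s)
      ((by fun_prop : Continuous _).intervalIntegrable _ _)]
  simp

lemma mul_integral_exp_kernel_mul_sub {γ : ℝ} (hγ : γ ≠ 0) (t : ℝ) :
    γ * ∫ s in (0 : ℝ)..t, Real.exp (-(γ * (t - s))) * (t - s) =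
      (1 - Real.exp (-(γ * t))) / γ - t * Real.exp (-(γ * t)) := by
  have hderiv : ∀ s, HasDerivAt (fun s => Real.exp (-(γ * (t - s))) * (t - s + γ⁻¹))
      (γ * (Real.exp (-(γ * (t - s))) * (t - s))) s := fun s => by
    have hlin : HasDerivAt (fun s => t - s + γ⁻¹) (-1) s := by
      simpa using ((hasDerivAt_id s).const_sub t).add_const γ⁻¹
    refine ((hasDerivAt_exp_kernel γ t s).mul hlin).congr_deriv ?_
    field_simp
    ring
  rw [← intervalIntegral.integral_const_mul, integral_eq_sub_of_hasDerivAt (fun s _ => hderiv s)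
    ((by fun_prop : Continuous _).intervalIntegrable _ _)]
  simp only [sub_self, mul_zero, neg_zero, Real.exp_zero, sub_zero]
  field_simp
  ring

/-- The normalized integrated Ornstein–Uhlenbeck process `A X^γ_t` driven by the path `f`. -/
noncomputable def integratedOU (γ : ℝ) (f : ℝ → ℝ) (t : ℝ) : ℝ :=
  γ * ∫ s in (0 : ℝ)..t, Real.exp (-(γ * (t - s))) * f s

lemma continuous_integratedOU (γ : ℝ) {f : ℝ → ℝ} (hf : Continuous f) :
    Continuous (integratedOU γ f) := by
  unfold integratedOU
  fun_prop

lemma integratedOU_sub_eq {γ t : ℝ} {f : ℝ → ℝ} (hf : IntervalIntegrable f volume 0 t) :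
    integratedOU γ f t - f t =
      γ * (∫ s in (0 : ℝ)..t, Real.exp (-(γ * (t - s))) * (f s - f t))
        - Real.exp (-(γ * t)) * f t := by
  have hexp : Continuous fun s => Real.exp (-(γ * (t - s))) := by fun_prop
  simp only [mul_sub (Real.exp _)]
  rw [integral_sub (hf.continuousOn_mul hexp.continuousOn)
    ((by fun_prop : Continuous fun s => Real.exp (-(γ * (t - s))) * f t).intervalIntegrable _ _),
    intervalIntegral.integral_mul_const, mul_sub,
    ← mul_assoc, mul_integral_exp_kernel, integratedOU]
  ring

lemma abs_integratedOU_sub_le {γ t ε C : ℝ} {f : ℝ → ℝ} (hγ : 0 < γ) (ht : 0 ≤ t)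
    (hf : ContinuousOn f (Icc 0 t)) (hf0 : f 0 = 0) (hC : 0 ≤ C)
    (hmod : ∀ s ∈ Icc 0 t, |f s - f t| ≤ ε + C * (t - s)) :
    |integratedOU γ f t - f t| ≤ ε + C / γ := by
  have hexp : Continuous fun s => Real.exp (-(γ * (t - s))) := by fun_prop
  have hf' : ContinuousOn f (uIcc 0 t) := by rwa [uIcc_of_le ht]
  have hint : |∫ s in (0 : ℝ)..t, Real.exp (-(γ * (t - s))) * (f s - f t)| ≤
      ∫ s in (0 : ℝ)..t, ε * Real.exp (-(γ * (t - s))) +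
        C * (Real.exp (-(γ * (t - s))) * (t - s)) := by
    refine (abs_integral_le_integral_abs ht).trans (integral_mono_on ht ?_ ?_ fun s hs => ?_)
    · exact ((hexp.continuousOn.mul (hf'.sub continuousOn_const)).intervalIntegrable).abs
    · exact (by fun_prop : Continuous _).intervalIntegrable _ _
    · rw [abs_mul, Real.abs_exp]
      nlinarith [hmod s hs, Real.exp_pos (-(γ * (t - s)))]
  have hbdry : |Real.exp (-(γ * t)) * f t| ≤ Real.exp (-(γ * t)) * (ε + C * t) := by
    have := hmod 0 ⟨le_rfl, ht⟩
    rw [hf0, zero_sub, abs_neg, sub_zero] at this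
    rw [abs_mul, Real.abs_exp]
    exact mul_le_mul_of_nonneg_left this (Real.exp_pos _).le
  rw [integral_add ((by fun_prop : Continuous _).intervalIntegrable _ _)
    ((by fun_prop : Continuous _).intervalIntegrable _ _), intervalIntegral.integral_const_mul,
    intervalIntegral.integral_const_mul] at hint
  have hK := mul_integral_exp_kernel γ t
  have hK' := mul_integral_exp_kernel_mul_sub hγ.ne' t
  have hCγ : 0 ≤ C / γ * Real.exp (-(γ * t)) := by positivity
  rw [integratedOU_sub_eq hf'.intervalIntegrable]
  calc _ ≤ γ * |∫ s in (0 : ℝ)..t, Real.exp (-(γ * (t - s))) * (f s - f t)|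
          + |Real.exp (-(γ * t)) * f t| := by
        rw [← abs_of_pos hγ, ← abs_mul, abs_of_pos hγ]; exact abs_sub _ _
    _ ≤ γ * ((ε * ∫ s in (0 : ℝ)..t, Real.exp (-(γ * (t - s)))) +
          C * ∫ s in (0 : ℝ)..t, Real.exp (-(γ * (t - s))) * (t - s))
          + Real.exp (-(γ * t)) * (ε + C * t) :=
        add_le_add (mul_le_mul_of_nonneg_left hint hγ.le) hbdry
    _ = ε * (1 - Real.exp (-(γ * t))) + C * ((1 - Real.exp (-(γ * t))) / γ
          - t * Real.exp (-(γ * t))) + Real.exp (-(γ * t)) * (ε + C * t) := by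
        rw [← hK', ← hK]; ring
    _ = ε + C / γ - C / γ * Real.exp (-(γ * t)) := by ring
    _ ≤ ε + C / γ := by linarith

theorem tendstoUniformlyOn_integratedOU {f : ℝ → ℝ} {T : ℝ} (hf : ContinuousOn f (Icc 0 T))
    (hf0 : f 0 = 0) :
    TendstoUniformlyOn (fun γ => integratedOU γ f) f atTop (Icc 0 T) := by
  rw [Metric.tendstoUniformlyOn_iff]
  intro ε hε
  obtain ⟨C, hC, hmod⟩ := isCompact_Icc.exists_abs_sub_le_add_mul_dist hf (half_pos hε)
  have hCγ : Tendsto (fun γ : ℝ => C / γ) atTop (𝓝 0) := tendsto_const_nhds.div_atTop tendsto_id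
  filter_upwards [eventually_gt_atTop 0, hCγ.eventually (gt_mem_nhds (half_pos hε))]
    with γ hγ hCγ t ht
  have hmod' : ∀ s ∈ Icc 0 t, |f s - f t| ≤ ε / 2 + C * (t - s) := fun s hs => by
    simpa [Real.dist_eq, abs_of_nonpos (sub_nonpos.2 hs.2)] using
      hmod s ⟨hs.1, hs.2.trans ht.2⟩ t ht
  rw [dist_comm, Real.dist_eq]
  linarith [abs_integratedOU_sub_le hγ ht.1 (hf.mono (Icc_subset_Icc_right ht.2)) hf0 hC hmod']

section Measurability

variable {Ω : Type*} [MeasurableSpace Ω]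

lemma measurable_intervalIntegral_of_measurable_uncurry {f : ℝ → Ω → ℝ}
    (hf : Measurable (Function.uncurry f)) (a b : ℝ) :
    Measurable fun ω => ∫ s in a..b, f s ω :=
  (hf.stronglyMeasurable.integral_prod_left).measurable.sub
    (hf.stronglyMeasurable.integral_prod_left).measurable

lemma measurable_integratedOU {X : ℝ → Ω → ℝ} (hX : Measurable (Function.uncurry X))
    (γ t : ℝ) : Measurable fun ω => integratedOU γ (X · ω) t :=
  (measurable_intervalIntegral_of_measurable_uncurry
    (((by fun_prop : Measurable fun s => Real.exp (-(γ * (t - s)))).comp measurable_fst).mul hX)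
      0 t).const_mul γ

lemma exists_continuous_measurable_ae_eq {ι : Type*} [TopologicalSpace ι] {P : Measure Ω}
    {X : ι → Ω → ℝ} (hmeas : ∀ t, Measurable (X t)) (hcont : ∀ᵐ ω ∂P, Continuous fun t => X t ω) :
    ∃ Y : ι → Ω → ℝ, (∀ ω, Continuous fun t => Y t ω) ∧ (∀ t, Measurable (Y t)) ∧
      ∀ᵐ ω ∂P, ∀ t, Y t ω = X t ω := by
  obtain ⟨S, hS_ae, hS, hS_cont⟩ := hcont.exists_measurable_mem
  refine ⟨fun t => S.indicator (X t), fun ω => ?_, fun t => (hmeas t).indicator hS, ?_⟩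
  · by_cases hω : ω ∈ S
    · simpa [indicator_of_mem hω] using hS_cont ω hω
    · simpa [indicator_of_notMem hω] using continuous_const
  · filter_upwards [hS_ae] with ω hω t using indicator_of_mem hω _

lemma tendsto_measure_exists_le_abs_sub {P : Measure Ω} [IsFiniteMeasure P] {ι : Type*}
    {l : Filter ι} [l.IsCountablyGenerated] {Y : ι → ℝ → Ω → ℝ} {Z : ℝ → Ω → ℝ}
    (hY : ∀ i t, Measurable (Y i t)) (hZ : ∀ t, Measurable (Z t))
    (hYc : ∀ i ω, Continuous fun t => Y i t ω) (hZc : ∀ ω, Continuous fun t => Z t ω)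
    {a b ε : ℝ} (hab : a < b) (hε : 0 < ε)
    (hlim : ∀ᵐ ω ∂P, TendstoUniformlyOn (fun i t => Y i t ω) (fun t => Z t ω) l (Icc a b)) :
    Tendsto (fun i => P {ω | ∃ t ∈ Icc a b, ε ≤ |Y i t ω - Z t ω|}) l (𝓝 0) := by
  set S : ι → Set Ω := fun i => {ω | ∃ q : ℚ, (q : ℝ) ∈ Ioo a b ∧ ε / 2 < |Y i q ω - Z q ω|}
  have hS : ∀ i, MeasurableSet (S i) := fun i => by
    simp only [S, ofPred_exists, ofPred_and]
    exact .iUnion fun q => (MeasurableSet.const _).inter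
      (measurableSet_lt measurable_const ((hY i q).sub (hZ q)).abs)
  have hS_lim : Tendsto (fun i => P (S i)) l (𝓝 0) := by
    rw [← measure_empty (μ := P)]
    refine tendsto_measure_of_ae_tendsto_indicator_of_isFiniteMeasure l .empty hS ?_
    filter_upwards [hlim] with ω hω
    filter_upwards [Metric.tendstoUniformlyOn_iff.1 hω (ε / 2) (half_pos hε)] with i hi
    simp only [mem_empty_iff_false, iff_false]
    rintro ⟨q, hq, hlt⟩
    have := hi q (Ioo_subset_Icc_self hq)
    rw [Real.dist_eq, abs_sub_comm] at this
    linarith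
  refine tendsto_of_tendsto_of_tendsto_of_le_of_le tendsto_const_nhds hS_lim (fun _ => zero_le)
    fun i => measure_mono ?_
  rintro ω ⟨t, ht, hεt⟩
  exact exists_rat_mem_Ioo_lt_of_continuous (φ := fun t => |Y i t ω - Z t ω|)
    ((hYc i ω).sub (hZc ω)).abs hab ht (by linarith)

end Measurability

/-- Let `B` be a standard one-dimensional Brownian motion with `B 0 = 0` and
almost surely continuous paths. Then almost surely, for every `T > 0`,
`sup_{t ∈ [0,T]} |γ ∫_0^t e^{−γ(t−s)} B_s ds − B_t| → 0` as `γ → ∞`. In particular, the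
normalized integrated Ornstein–Uhlenbeck process `A X^γ_t = γ ∫_0^t e^{−γ(t−s)} B_s ds`
driven by `B` with zero initial conditions converges to `B` uniformly on compact time
intervals, in probability. -/
theorem integratedOU_brownian_tendsto_uniformly
    {Ω : Type*} [MeasurableSpace Ω] (P : Measure Ω) (B : ℝ → Ω → ℝ)
    (hB : IsStandardBrownianMotion P B) :
    (∀ᵐ ω ∂P, ∀ T > (0 : ℝ),
      TendstoUniformlyOn
        (fun (γ : ℝ) (t : ℝ) => γ * ∫ s in (0 : ℝ)..t, Real.exp (-(γ * (t - s))) * B s ω)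
        (fun t => B t ω) atTop (Set.Icc 0 T)) ∧
    (∀ T > (0 : ℝ), ∀ ε > (0 : ℝ),
      Tendsto
        (fun γ : ℝ => P {ω | ∃ t ∈ Set.Icc (0 : ℝ) T,
          ε ≤ |γ * (∫ s in (0 : ℝ)..t, Real.exp (-(γ * (t - s))) * B s ω) - B t ω|})
        atTop (nhds 0)) := by
  have := hB.isProbability
  have hpath : ∀ᵐ ω ∂P, ∀ T > (0 : ℝ),
      TendstoUniformlyOn (fun γ => integratedOU γ (B · ω)) (B · ω) atTop (Icc 0 T) := by
    filter_upwards [hB.cont] with ω hω T _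
    exact tendstoUniformlyOn_integratedOU hω.continuousOn (hB.init ω)
  refine ⟨hpath, fun T hT ε hε => ?_⟩
  -- `B` need not be jointly measurable; an indistinguishable version with continuous paths is.
  obtain ⟨B', hB'c, hB'm, hB'B⟩ := exists_continuous_measurable_ae_eq hB.measurable hB.cont
  have hY := measurable_integratedOU (measurable_uncurry_of_continuous_of_measurable hB'c hB'm)
  have hYc := fun γ ω => continuous_integratedOU γ (hB'c ω)
  refine (tendsto_measure_exists_le_abs_sub hY hB'm hYc hB'c hT hε ?_).congr fun γ =>
    measure_congr ?_
  · filter_upwards [hpath, hB'B] with ω hω hω'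
    simpa only [hω'] using hω T hT
  · filter_upwards [hB'B] with ω hω
    change (∃ t ∈ Icc 0 T, _) = ∃ t ∈ Icc 0 T, _
    simp only [integratedOU, hω]
end
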